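/- In the Black-Scholes setting, for fixed S, T, σ > 0 and r, q ∈ ℝ, and for any strikes 0 < K1 < K2 < K3, the butterfly-spread no-arbitrage condition holds: (K3 − K2)·C(S,K1,T,r,q,σ) − (K3 − K1)·C(S,K2,T,r,q,σ) + (K2 − K1)·C(S,K3,T,r,q,σ) > 0. -/

import Mathlib

open Real

/-- Standard normal density. -/
noncomputable def stdNormalPdf (x : ℝ) : ℝ := Real.exp (-x ^ 2 / 2) / Real.sqrt (2 * Real.pi)

/-- Standard normal cumulative distribution function. -/
noncomputable def stdNormalCdf (x : ℝ) : ℝ := ∫ t in Set.Iic x, stdNormalPdf t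

/-- Black-Scholes `d₁`. -/
noncomputable def bsD1 (S K T r q σ : ℝ) : ℝ :=
  (Real.log (S / K) + (r - q + σ ^ 2 / 2) * T) / (σ * Real.sqrt T)

/-- Black-Scholes `d₂`. -/
noncomputable def bsD2 (S K T r q σ : ℝ) : ℝ := bsD1 S K T r q σ - σ * Real.sqrt T

/-- Black-Scholes call option price. -/
noncomputable def bsCall (S K T r q σ : ℝ) : ℝ :=
  S * Real.exp (-q * T) * stdNormalCdf (bsD1 S K T r q σ) -
    K * Real.exp (-r * T) * stdNormalCdf (bsD2 S K T r q σ)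

open MeasureTheory Set

/-!
The call price is strictly convex in the strike, and the butterfly spread is a positive multiple
of a strict second difference. Convexity comes from the strike derivative `-e^{-rT} N(d₂)`: the
`N'(d₁)` and `N'(d₂)` contributions cancel, and `d₂` strictly decreases in the strike.
-/

theorem StrictConvexOn.butterfly_pos {s : Set ℝ} {f : ℝ → ℝ} (hf : StrictConvexOn ℝ s f)
    {x y z : ℝ} (hx : x ∈ s) (hz : z ∈ s) (hxy : x < y) (hyz : y < z) :
    0 < (z - y) * f x - (z - x) * f y + (y - x) * f z := by
  have hslope := hf.slope_strict_mono_adjacent hx hz hxy hyz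
  rw [div_lt_div_iff₀ (sub_pos.2 hxy) (sub_pos.2 hyz)] at hslope
  linear_combination hslope

lemma stdNormalPdf_pos (x : ℝ) : 0 < stdNormalPdf x := by
  unfold stdNormalPdf; positivity

lemma continuous_stdNormalPdf : Continuous stdNormalPdf := by
  unfold stdNormalPdf; fun_prop

lemma integrable_stdNormalPdf : Integrable stdNormalPdf := by
  have h := (integrable_exp_neg_mul_sq (b := 1 / 2) (by norm_num)).div_const √(2 * π)
  convert h using 2 with x
  unfold stdNormalPdf
  ring_nf

lemma stdNormalCdf_sub (a b : ℝ) :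
    stdNormalCdf b - stdNormalCdf a = ∫ t in a..b, stdNormalPdf t :=
  intervalIntegral.integral_Iic_sub_Iic integrable_stdNormalPdf.integrableOn
    integrable_stdNormalPdf.integrableOn

lemma hasDerivAt_stdNormalCdf (x : ℝ) : HasDerivAt stdNormalCdf (stdNormalPdf x) x := by
  have hFTC : HasDerivAt (fun y ↦ stdNormalCdf 0 + ∫ t in (0 : ℝ)..y, stdNormalPdf t)
      (stdNormalPdf x) x :=
    (intervalIntegral.integral_hasDerivAt_right integrable_stdNormalPdf.intervalIntegrable
      continuous_stdNormalPdf.aestronglyMeasurable.stronglyMeasurableAtFilter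
      continuous_stdNormalPdf.continuousAt).const_add _
  refine hFTC.congr_of_eventuallyEq (Filter.Eventually.of_forall fun y ↦ ?_)
  simp only [← stdNormalCdf_sub, add_sub_cancel]

lemma stdNormalCdf_strictMono : StrictMono stdNormalCdf := fun a b hab ↦ by
  have hpos : 0 < ∫ t in a..b, stdNormalPdf t :=
    intervalIntegral.intervalIntegral_pos_of_pos integrable_stdNormalPdf.intervalIntegrable
      stdNormalPdf_pos hab
  linarith [stdNormalCdf_sub a b]

section BlackScholes

variable {S K T r q σ : ℝ}

lemma sq_bsD1_sub_sq_bsD2 (hT : 0 < T) (hσ : σ ≠ 0) :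
    bsD1 S K T r q σ ^ 2 - bsD2 S K T r q σ ^ 2 = 2 * (log (S / K) + (r - q) * T) := by
  have hc : σ * √T ≠ 0 := mul_ne_zero hσ (sqrt_pos.2 hT).ne'
  have hc_sq : (σ * √T) ^ 2 = σ ^ 2 * T := by rw [mul_pow, sq_sqrt hT.le]
  have hd1 : bsD1 S K T r q σ * (σ * √T) = log (S / K) + (r - q + σ ^ 2 / 2) * T := by
    unfold bsD1; field_simp
  unfold bsD2
  linear_combination 2 * hd1 - hc_sq

lemma mul_stdNormalPdf_bsD1_eq (hS : 0 < S) (hK : 0 < K) (hT : 0 < T) (hσ : σ ≠ 0) :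
    S * exp (-q * T) * stdNormalPdf (bsD1 S K T r q σ) =
      K * exp (-r * T) * stdNormalPdf (bsD2 S K T r q σ) := by
  have hsq := sq_bsD1_sub_sq_bsD2 (S := S) (K := K) (r := r) (q := q) hT hσ
  rw [log_div hS.ne' hK.ne'] at hsq
  have hexp : exp (-bsD1 S K T r q σ ^ 2 / 2) =
      exp (-bsD2 S K T r q σ ^ 2 / 2) * (K / S) * exp ((q - r) * T) := by
    rw [← exp_log (div_pos hK hS), ← exp_add, ← exp_add, log_div hK.ne' hS.ne']
    congr 1
    linear_combination -hsq / 2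
  unfold stdNormalPdf
  rw [hexp]
  field_simp
  rw [← exp_add]
  ring_nf

lemma hasDerivAt_bsD1_strike (hS : S ≠ 0) (hK : K ≠ 0) :
    HasDerivAt (fun k ↦ bsD1 S k T r q σ) (-K⁻¹ / (σ * √T)) K := by
  have h : HasDerivAt (fun k ↦ (log S - log k + (r - q + σ ^ 2 / 2) * T) / (σ * √T))
      ((0 - K⁻¹ + 0) / (σ * √T)) K :=
    (((hasDerivAt_const K _).sub (hasDerivAt_log hK)).add (hasDerivAt_const K _)).div_const _
  rw [zero_sub, add_zero] at h
  refine h.congr_of_eventuallyEq ?_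
  filter_upwards [isOpen_ne.mem_nhds hK] with k hk
  rw [bsD1, log_div hS hk]

lemma hasDerivAt_bsCall_strike (hS : 0 < S) (hK : 0 < K) (hT : 0 < T) (hσ : σ ≠ 0) :
    HasDerivAt (fun k ↦ bsCall S k T r q σ) (-(exp (-r * T) * stdNormalCdf (bsD2 S K T r q σ)))
      K := by
  have hd1 := hasDerivAt_bsD1_strike (T := T) (r := r) (q := q) (σ := σ) hS.ne' hK.ne'
  have hd2 : HasDerivAt (fun k ↦ bsD2 S k T r q σ) (-K⁻¹ / (σ * √T)) K := hd1.sub_const _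
  have h := (((hasDerivAt_stdNormalCdf _).comp K hd1).const_mul (S * exp (-q * T))).sub
    (((hasDerivAt_id K).mul_const (exp (-r * T))).mul ((hasDerivAt_stdNormalCdf _).comp K hd2))
  have hpdf := mul_stdNormalPdf_bsD1_eq (r := r) (q := q) hS hK hT hσ
  refine h.congr_deriv ?_
  simp only [Function.comp_apply, id]
  linear_combination -K⁻¹ / (σ * √T) * hpdf

lemma bsD2_strictAntiOn_strike (hS : 0 < S) (hT : 0 < T) (hσ : 0 < σ) :
    StrictAntiOn (fun k ↦ bsD2 S k T r q σ) (Ioi 0) := fun x hx y _ hxy ↦ by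
  have hlog : log (S / y) < log (S / x) :=
    log_lt_log (div_pos hS (hx.out.trans hxy)) (div_lt_div_of_pos_left hS hx hxy)
  have hc : 0 < σ * √T := mul_pos hσ (sqrt_pos.2 hT)
  simp only [bsD2, bsD1]
  gcongr

theorem bsCall_strictConvexOn_strike (hS : 0 < S) (hT : 0 < T) (hσ : 0 < σ) :
    StrictConvexOn ℝ (Ioi 0) (fun k ↦ bsCall S k T r q σ) := by
  refine StrictMonoOn.strictConvexOn_of_deriv (convex_Ioi 0)
    (fun k hk ↦ (hasDerivAt_bsCall_strike hS hk hT hσ.ne').continuousAt.continuousWithinAt) ?_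
  rw [interior_Ioi]
  intro x hx y hy hxy
  rw [(hasDerivAt_bsCall_strike hS hx hT hσ.ne').deriv,
    (hasDerivAt_bsCall_strike hS hy hT hσ.ne').deriv, neg_lt_neg_iff]
  exact mul_lt_mul_of_pos_left
    (stdNormalCdf_strictMono (bsD2_strictAntiOn_strike hS hT hσ hx hy hxy)) (exp_pos _)

end BlackScholes

/-- Butterfly-spread no-arbitrage condition for Black-Scholes call prices. -/
theorem bsCall_butterfly (S T σ r q : ℝ) (hS : 0 < S) (hT : 0 < T) (hσ : 0 < σ)
    (K1 K2 K3 : ℝ) (hK1 : 0 < K1) (h12 : K1 < K2) (h23 : K2 < K3) :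
    0 < (K3 - K2) * bsCall S K1 T r q σ - (K3 - K1) * bsCall S K2 T r q σ +
          (K2 - K1) * bsCall S K3 T r q σ :=
  (bsCall_strictConvexOn_strike hS hT hσ).butterfly_pos hK1 (hK1.trans (h12.trans h23)) h12 h23
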